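/- arXiv:2006.05482 — 10 statements merged into one kernel-verified Lean document; each statement's English description precedes it below -/
import Mathlib

section
/- Let P be a set of n points in ℝ^d, let f, g, h : P × ℝ^d → [0,∞), let z > 0, and let c₁, c₂ > 0 satisfy c₁(g(p,x)^z + h(p,x)^z) ≤ f(p,x) ≤ c₂(g(p,x)^z + h(p,x)^z) for every p ∈ P and x ∈ ℝ^d. Assume g(p, b·x) = b·g(p,x) for every p ∈ P, x ∈ ℝ^d and b > 0, and h(p,x)^z ≤ (2/n)·∑_{q∈P} h(q,x)^z for every p ∈ P and x ∈ ℝ^d. Let D be a d×d diagonal matrix with nonnegative entries and V a d×d orthogonal matrix such that DVᵀ is invertible and for every x ∈ ℝ^d, c₁(‖DVᵀx‖₂^z + ∑_{q∈P} h(q,x)^z) ≤ ∑_{q∈P} f(q,x). Suppose there exist d unit vectors v₁,…,v_d ∈ ℝ^d and c > 0 such that for every unit vector y ∈ ℝ^d and every p ∈ P, g(p,(DVᵀ)⁻¹y)^z ≤ c·∑_{j=1}^d g(p,(DVᵀ)⁻¹v_j)^z. Then for every p ∈ P, the sensitivity of p satisfies sup_{x : ∑_{q∈P} f(q,x) > 0}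 f(p,x)/∑_{q∈P} f(q,x) ≤ 2c₂/(c₁n) + (c·c₂/c₁)·∑_{j=1}^d g(p,(DVᵀ)⁻¹v_j)^z. -/
open Matrix

/-- The Euclidean (`ℓ₂`) norm of a vector in `ℝ^d`. -/
noncomputable def l2 {d : ℕ} (x : Fin d → ℝ) : ℝ := Real.sqrt (∑ i, x i ^ 2)

lemma l2_nonneg {d : ℕ} (x : Fin d → ℝ) : 0 ≤ l2 x := Real.sqrt_nonneg _

lemma l2_smul {d : ℕ} (b : ℝ) (x : Fin d → ℝ) : l2 (b • x) = |b| * l2 x := by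
  unfold l2
  rw [← Real.sqrt_sq_eq_abs, ← Real.sqrt_mul (sq_nonneg b), Finset.mul_sum]
  congr 1
  apply Finset.sum_congr rfl
  intro i _
  simp [Pi.smul_apply, smul_eq_mul]
  ring

lemma l2_eq_zero {d : ℕ} {x : Fin d → ℝ} (hx : l2 x = 0) : x = 0 := by
  have h0 : (0:ℝ) ≤ ∑ i, x i ^ 2 := Finset.sum_nonneg fun i _ => sq_nonneg _
  have hs : ∑ i, x i ^ 2 = 0 :=
    le_antisymm (Real.sqrt_eq_zero'.mp hx) h0
  funext i
  have := (Finset.sum_eq_zero_iff_of_nonneg (fun i _ => sq_nonneg (x i))).mp hs i (Finset.mem_univ i)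
  simpa using pow_eq_zero_iff (two_ne_zero) |>.mp this

/-- Sensitivity bound for near-convex functions: under the `f`-SVD assumptions, the
sensitivity of every `p ∈ P` is at most
`2c₂/(c₁ n) + (c c₂/c₁) ∑_j g(p, (DVᵀ)⁻¹ v_j)^z`. -/
theorem sensitivity_bound {d n : ℕ} (P : Finset (Fin d → ℝ)) (hcard : P.card = n)
    (f g h : (Fin d → ℝ) → (Fin d → ℝ) → ℝ)
    (hf0 : ∀ p ∈ P, ∀ x, 0 ≤ f p x) (hg0 : ∀ p ∈ P, ∀ x, 0 ≤ g p x)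
    (hh0 : ∀ p ∈ P, ∀ x, 0 ≤ h p x)
    (z c₁ c₂ : ℝ) (hz : 0 < z) (hc₁ : 0 < c₁) (hc₂ : 0 < c₂)
    (hsand : ∀ p ∈ P, ∀ x, c₁ * (g p x ^ z + h p x ^ z) ≤ f p x ∧
      f p x ≤ c₂ * (g p x ^ z + h p x ^ z))
    (hghom : ∀ p ∈ P, ∀ x, ∀ b : ℝ, 0 < b → g p (b • x) = b * g p x)
    (hhsmall : ∀ p ∈ P, ∀ x, h p x ^ z ≤ (2 / (n : ℝ)) * ∑ q ∈ P, h q x ^ z)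
    (D V : Matrix (Fin d) (Fin d) ℝ) (hD : D.IsDiag) (hDnn : ∀ i, 0 ≤ D i i)
    (hV : Vᵀ * V = 1 ∧ V * Vᵀ = 1) (hinv : IsUnit (D * Vᵀ))
    (hlow : ∀ x, c₁ * (l2 ((D * Vᵀ).mulVec x) ^ z + ∑ q ∈ P, h q x ^ z) ≤ ∑ q ∈ P, f q x)
    (v : Fin d → Fin d → ℝ) (hv : ∀ j, l2 (v j) = 1) (c : ℝ) (hc : 0 < c)
    (hcv : ∀ y : Fin d → ℝ, l2 y = 1 → ∀ p ∈ P,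
      g p ((D * Vᵀ)⁻¹.mulVec y) ^ z ≤ c * ∑ j, g p ((D * Vᵀ)⁻¹.mulVec (v j)) ^ z) :
    ∀ p ∈ P,
      (⨆ x : {x : Fin d → ℝ // 0 < ∑ q ∈ P, f q x},
        f p (x : Fin d → ℝ) / ∑ q ∈ P, f q (x : Fin d → ℝ)) ≤
      2 * c₂ / (c₁ * n) + (c * c₂ / c₁) * ∑ j, g p ((D * Vᵀ)⁻¹.mulVec (v j)) ^ z := by
  intro p hp
  set A := D * Vᵀ with hA
  have hAdet : IsUnit A.det := (Matrix.isUnit_iff_isUnit_det A).mp hinv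
  have hAinv : A⁻¹ * A = 1 := Matrix.nonsing_inv_mul A hAdet
  set K := ∑ j, g p (A⁻¹.mulVec (v j)) ^ z with hKdef
  have hK0 : 0 ≤ K :=
    Finset.sum_nonneg fun j _ => Real.rpow_nonneg (hg0 p hp _) z
  have hn : 0 < (n : ℝ) := by
    have : 0 < P.card := Finset.card_pos.mpr ⟨p, hp⟩
    exact_mod_cast hcard ▸ this
  set R := 2 * c₂ / (c₁ * n) + (c * c₂ / c₁) * K with hRdef
  have hR0 : 0 ≤ R := by
    apply add_nonneg
    · positivity
    · exact mul_nonneg (by positivity) hK0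
  -- the key bound for every admissible x
  have key : ∀ x : Fin d → ℝ, 0 < ∑ q ∈ P, f q x →
      f p x / ∑ q ∈ P, f q x ≤ R := by
    intro x hx
    set S := ∑ q ∈ P, f q x with hS
    rw [div_le_iff₀ hx]
    have hT0 : 0 ≤ ∑ q ∈ P, h q x ^ z :=
      Finset.sum_nonneg fun q hq => Real.rpow_nonneg (hh0 q hq x) z
    have hL0 : 0 ≤ l2 (A.mulVec x) ^ z := Real.rpow_nonneg (l2_nonneg _) z
    have hlowx := hlow x
    have hTS : c₁ * (∑ q ∈ P, h q x ^ z) ≤ S := by nlinarith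
    have hLS : c₁ * (l2 (A.mulVec x) ^ z) ≤ S := by nlinarith
    -- h term
    have hterm : c₂ * h p x ^ z ≤ 2 * c₂ / (c₁ * n) * S := by
      have h1 : h p x ^ z ≤ (2 / (n : ℝ)) * ∑ q ∈ P, h q x ^ z := hhsmall p hp x
      have h2 : (2 / (n : ℝ)) * ∑ q ∈ P, h q x ^ z ≤ (2 / (n : ℝ)) * (S / c₁) := by
        apply mul_le_mul_of_nonneg_left _ (by positivity)
        rw [le_div_iff₀ hc₁]
        nlinarith
      have h3 : c₂ * ((2 / (n : ℝ)) * (S / c₁)) = 2 * c₂ / (c₁ * n) * S := by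
        field_simp
      calc c₂ * h p x ^ z ≤ c₂ * ((2 / (n : ℝ)) * (S / c₁)) := by
            apply mul_le_mul_of_nonneg_left _ hc₂.le
            exact h1.trans h2
        _ = 2 * c₂ / (c₁ * n) * S := h3
    -- g term
    have gterm : c₂ * g p x ^ z ≤ (c * c₂ / c₁) * K * S := by
      by_cases hx0 : x = 0
      · have hg00 : g p x = 0 := by
          have := hghom p hp (0 : Fin d → ℝ) 2 (by norm_num)
          rw [smul_zero] at this
          subst hx0
          linarith
        rw [hg00, Real.zero_rpow hz.ne', mul_zero]
        have : 0 ≤ (c * c₂ / c₁) * K := mul_nonneg (by positivity) hK0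
        nlinarith
      · have hAx : A.mulVec x ≠ 0 := by
          intro hzero
          apply hx0
          have : A⁻¹.mulVec (A.mulVec x) = x := by
            rw [Matrix.mulVec_mulVec, hAinv, Matrix.one_mulVec]
          rw [hzero, Matrix.mulVec_zero] at this
          exact this.symm
        set r := l2 (A.mulVec x) with hr
        have hr0 : 0 < r := by
          rcases lt_or_eq_of_le (l2_nonneg (A.mulVec x)) with h' | h'
          · exact h'
          · exact absurd (l2_eq_zero h'.symm) hAx
        set y := r⁻¹ • A.mulVec x with hy
        have hy1 : l2 y = 1 := by
          rw [hy, l2_smul, abs_of_pos (inv_pos.mpr hr0), ← hr, inv_mul_cancel₀ hr0.ne']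
        have hxy : x = r • A⁻¹.mulVec y := by
          rw [hy, Matrix.mulVec_smul, smul_smul, mul_inv_cancel₀ hr0.ne', one_smul,
            Matrix.mulVec_mulVec, hAinv, Matrix.one_mulVec]
        have hgx : g p x = r * g p (A⁻¹.mulVec y) := by
          conv_lhs => rw [hxy]
          exact hghom p hp _ r hr0
        have hgz : g p x ^ z = r ^ z * g p (A⁻¹.mulVec y) ^ z := by
          rw [hgx, Real.mul_rpow hr0.le (hg0 p hp _)]
        have hbound : g p (A⁻¹.mulVec y) ^ z ≤ c * K := hcv y hy1 p hp
        have hrz : r ^ z ≤ S / c₁ := by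
          rw [le_div_iff₀ hc₁]; nlinarith
        have hrznn : 0 ≤ r ^ z := Real.rpow_nonneg hr0.le z
        have hgynn : 0 ≤ g p (A⁻¹.mulVec y) ^ z := Real.rpow_nonneg (hg0 p hp _) z
        have : g p x ^ z ≤ (S / c₁) * (c * K) := by
          rw [hgz]
          calc r ^ z * g p (A⁻¹.mulVec y) ^ z ≤ r ^ z * (c * K) :=
                mul_le_mul_of_nonneg_left hbound hrznn
            _ ≤ (S / c₁) * (c * K) :=
                mul_le_mul_of_nonneg_right hrz (by positivity)
        have heq : c₂ * ((S / c₁) * (c * K)) = (c * c₂ / c₁) * K * S := by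
          field_simp
        calc c₂ * g p x ^ z ≤ c₂ * ((S / c₁) * (c * K)) :=
              mul_le_mul_of_nonneg_left this hc₂.le
          _ = (c * c₂ / c₁) * K * S := heq
    have hfup : f p x ≤ c₂ * (g p x ^ z + h p x ^ z) := (hsand p hp x).2
    calc f p x ≤ c₂ * g p x ^ z + c₂ * h p x ^ z := by linarith [hfup]
      _ ≤ 2 * c₂ / (c₁ * n) * S + (c * c₂ / c₁) * K * S := by linarith
      _ = R * S := by rw [hRdef]; ring
  by_cases hne : Nonempty {x : Fin d → ℝ // 0 < ∑ q ∈ P, f q x}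
  · exact ciSup_le fun ⟨x, hx⟩ => key x hx
  · rw [not_nonempty_iff] at hne
    rw [Real.iSup_of_isEmpty]
    exact hR0
end

section
/- Let P be a set of n points in ℝ^d with a weight function w : P → [0,∞) whose total weight W = ∑_{q∈P} w(q) is positive, let f, g, h : P × ℝ^d → [0,∞), let z > 0, and let c₁, c₂ > 0 satisfy c₁(g(p,x)^z + h(p,x)^z) ≤ f(p,x) ≤ c₂(g(p,x)^z + h(p,x)^z) for every p ∈ P and x ∈ ℝ^d. Assume there exist c₃, c₄ > 0 with c₃·b·g(p,x) ≤ g(p,b·x) ≤ c₄·b·g(p,x) for every p ∈ P, x ∈ ℝ^d and b > 0, and c₅ > 0 with w(p)·h(p,x)^z ≤ (c₅·w(p)/W)·∑_{q∈P} w(q)·h(q,x)^z for every p ∈ P and x ∈ ℝ^d. Let D be a d×d diagonal matrix with nonnegative entries and V a d×d orthogonal matrix such that DVᵀ is invertible and for every x ∈ ℝ^d, c₁((c₃‖DVᵀx‖₂)^z + ∑_{q∈P} w(q)h(q,x)^z) ≤ ∑_{q∈P} w(q)f(q,x), and let α > 0 satisfy ∑_{q∈P} w(q)^{max{1,1/z}}·g(q,x)^{max{1,z}}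 ≤ (c₄·α·‖DVᵀx‖₂)^{max{1,z}} for every x ∈ ℝ^d. Suppose there exist d unit vectors v₁,…,v_d ∈ ℝ^d and c > 0 such that for every unit vector y ∈ ℝ^d and every p ∈ P, g(p,(DVᵀ)⁻¹y)^z ≤ c·∑_{j=1}^d g(p,(DVᵀ)⁻¹v_j)^z. Then the sum over p ∈ P of the weighted sensitivities sup_{x : ∑_{q∈P} w(q)f(q,x) > 0} w(p)f(p,x)/∑_{q∈P} w(q)f(q,x) is at most c₂c₅/c₁ + (c·c₂·c₄^z/(c₁·c₃^{2z}))·max{n^{1−z}, 1}·α^z·d. -/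
/-!
Split `f ≤ c₂ (gᶻ + hᶻ)`. By the `h`-smallness assumption and the lower bound on the total cost,
the `h`-part of the sensitivity of `p` is at most `(c₂ c₅ / c₁) · w p / W`, and these sum to
`c₂ c₅ / c₁`. For the `g`-part write `A = D Vᵀ`: rescaling `x` to the unit sphere of `‖A ·‖`
and using the lower homogeneity of `g` gives `c₃ᶻ g(p,x)ᶻ ≤ ‖A x‖ᶻ · c ∑ⱼ g(p, A⁻¹ vⱼ)ᶻ`, while the
lower bound on the total cost gives `c₁ c₃ᶻ ‖A x‖ᶻ ≤ ∑_q w q f(q,x)`. Summing over `p`, direction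
`j` contributes `∑ₚ w p g(p, A⁻¹ vⱼ)ᶻ`, which the upper bound at `x = A⁻¹ vⱼ` controls by
`max (n^(1-z)) 1 · (c₄ α)ᶻ`; for `z < 1` this uses concavity of `t ↦ tᶻ`.
-/

open Matrix

open Finset

noncomputable def weightedSensitivity {α β : Type*} (P : Finset α) (w : α → ℝ) (f : α → β → ℝ)
    (p : α) : ℝ :=
  ⨆ x : {x : β // 0 < ∑ q ∈ P, w q * f q x}, w p * f p x / ∑ q ∈ P, w q * f q x

/-- `0 ≤ B` is needed because an empty supremum is `0` in `ℝ`. -/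
theorem weightedSensitivity_le {α β : Type*} {P : Finset α} {w : α → ℝ} {f : α → β → ℝ} {p : α}
    {B : ℝ} (hB : 0 ≤ B) (h : ∀ x, w p * f p x ≤ B * ∑ q ∈ P, w q * f q x) :
    weightedSensitivity P w f p ≤ B :=
  Real.iSup_le (fun x ↦ (div_le_iff₀ x.2).2 (h x)) hB

theorem sum_rpow_le_card_rpow_mul_rpow_sum {ι : Type*} (s : Finset ι) {t : ι → ℝ}
    (ht : ∀ i ∈ s, 0 ≤ t i) {z : ℝ} (hz₀ : 0 ≤ z) (hz₁ : z ≤ 1) :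
    ∑ i ∈ s, t i ^ z ≤ (#s : ℝ) ^ (1 - z) * (∑ i ∈ s, t i) ^ z := by
  rcases s.eq_empty_or_nonempty with rfl | hs
  · simp only [sum_empty, card_empty, Nat.cast_zero]
    positivity
  have hm : (0 : ℝ) < #s := by exact_mod_cast hs.card_pos
  have jensen := (Real.concaveOn_rpow hz₀ hz₁).le_map_sum (t := s) (w := fun _ ↦ (#s : ℝ)⁻¹)
    (p := t) (fun _ _ ↦ by positivity) (by simp [hm.ne']) ht
  simp only [smul_eq_mul, ← mul_sum] at jensen
  rw [Real.mul_rpow (by positivity) (sum_nonneg ht), Real.inv_rpow hm.le] at jensen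
  calc ∑ i ∈ s, t i ^ z = #s * ((#s : ℝ)⁻¹ * ∑ i ∈ s, t i ^ z) := by field_simp
    _ ≤ #s * (((#s : ℝ) ^ z)⁻¹ * (∑ i ∈ s, t i) ^ z) := by gcongr
    _ = (#s : ℝ) ^ (1 - z) * (∑ i ∈ s, t i) ^ z := by
      rw [Real.rpow_sub hm, Real.rpow_one]; ring

theorem sum_mul_rpow_le_of_sum_rpow_max_le {ι : Type*} (s : Finset ι) {w a : ι → ℝ}
    (hw : ∀ i ∈ s, 0 ≤ w i) (ha : ∀ i ∈ s, 0 ≤ a i) {z K : ℝ} (hz : 0 < z) (hK : 0 ≤ K)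
    (h : ∑ i ∈ s, w i ^ max 1 (1 / z) * a i ^ max 1 z ≤ K ^ max 1 z) :
    ∑ i ∈ s, w i * a i ^ z ≤ max ((#s : ℝ) ^ (1 - z)) 1 * K ^ z := by
  rcases le_or_gt 1 z with hz₁ | hz₁
  · rw [max_eq_right hz₁, max_eq_left ((div_le_one hz).2 hz₁)] at h
    simp only [Real.rpow_one] at h
    exact h.trans (le_mul_of_one_le_left (by positivity) (le_max_right _ _))
  · rw [max_eq_left hz₁.le, max_eq_right ((one_le_div hz).2 hz₁.le)] at h
    simp only [Real.rpow_one] at h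
    have ht : ∀ i ∈ s, 0 ≤ w i ^ (1 / z) * a i :=
      fun i hi ↦ mul_nonneg (Real.rpow_nonneg (hw i hi) _) (ha i hi)
    calc ∑ i ∈ s, w i * a i ^ z = ∑ i ∈ s, (w i ^ (1 / z) * a i) ^ z := by
          refine sum_congr rfl fun i hi ↦ ?_
          rw [Real.mul_rpow (Real.rpow_nonneg (hw i hi) _) (ha i hi), ← Real.rpow_mul (hw i hi),
            one_div_mul_cancel hz.ne', Real.rpow_one]
      _ ≤ (#s : ℝ) ^ (1 - z) * (∑ i ∈ s, w i ^ (1 / z) * a i) ^ z :=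
          sum_rpow_le_card_rpow_mul_rpow_sum s ht hz.le hz₁.le
      _ ≤ max ((#s : ℝ) ^ (1 - z)) 1 * K ^ z :=
          mul_le_mul (le_max_left _ _) (Real.rpow_le_rpow (sum_nonneg ht) h hz.le)
            (Real.rpow_nonneg (sum_nonneg ht) z) (by positivity)

theorem rpow_mul_le_norm_rpow_mul {E : Type*} [NormedAddCommGroup E] [NormedSpace ℝ E]
    {φ : E → ℝ} {c₃ z K : ℝ} (hc₃ : 0 < c₃) (hz : 0 < z) (hφ₀ : ∀ u, 0 ≤ φ u)
    (hφ : ∀ u, ∀ b : ℝ, 0 < b → c₃ * b * φ u ≤ φ (b • u))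
    (hK : ∀ u, ‖u‖ = 1 → φ u ^ z ≤ K) (u : E) :
    (c₃ * φ u) ^ z ≤ ‖u‖ ^ z * K := by
  rcases eq_or_ne u 0 with rfl | hu
  · have hφ0 : φ 0 = 0 := by
      have h := hφ 0 (2 / c₃) (by positivity)
      rw [smul_zero, mul_div_cancel₀ _ hc₃.ne'] at h
      linarith [hφ₀ 0]
    simp [hφ0, Real.zero_rpow hz.ne']
  have hn : 0 < ‖u‖ := norm_pos_iff.2 hu
  have hunit : ‖‖u‖⁻¹ • u‖ = 1 := by
    rw [norm_smul, norm_inv, norm_norm, inv_mul_cancel₀ hn.ne']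
  have hle : c₃ * φ u ≤ ‖u‖ * φ (‖u‖⁻¹ • u) :=
    calc c₃ * φ u = ‖u‖ * (c₃ * ‖u‖⁻¹ * φ u) := by field_simp
      _ ≤ ‖u‖ * φ (‖u‖⁻¹ • u) := by gcongr; exact hφ u _ (inv_pos.2 hn)
  calc (c₃ * φ u) ^ z ≤ (‖u‖ * φ (‖u‖⁻¹ • u)) ^ z := by
        gcongr
        exact mul_nonneg hc₃.le (hφ₀ u)
    _ = ‖u‖ ^ z * φ (‖u‖⁻¹ • u) ^ z := Real.mul_rpow (norm_nonneg _) (hφ₀ _)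
    _ ≤ ‖u‖ ^ z * K := by gcongr; exact hK _ hunit

theorem l2_eq_norm {d : ℕ} (x : Fin d → ℝ) :
    l2 x = ‖(WithLp.toLp 2 x : EuclideanSpace ℝ (Fin d))‖ := by
  simp [l2, EuclideanSpace.norm_eq]

theorem Matrix.nonsing_inv_mulVec_mulVec {n R : Type*} [Fintype n] [DecidableEq n] [CommRing R]
    {A : Matrix n n R} (hA : IsUnit A) (x : n → R) : A⁻¹ *ᵥ (A *ᵥ x) = x := by
  rw [mulVec_mulVec, nonsing_inv_mul _ ((isUnit_iff_isUnit_det A).1 hA), one_mulVec]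

theorem Matrix.mulVec_nonsing_inv_mulVec {n R : Type*} [Fintype n] [DecidableEq n] [CommRing R]
    {A : Matrix n n R} (hA : IsUnit A) (x : n → R) : A *ᵥ (A⁻¹ *ᵥ x) = x := by
  rw [mulVec_mulVec, mul_nonsing_inv _ ((isUnit_iff_isUnit_det A).1 hA), one_mulVec]

theorem rpow_mul_le_l2_mulVec_rpow_mul {d : ℕ} {A : Matrix (Fin d) (Fin d) ℝ} (hA : IsUnit A)
    {φ : (Fin d → ℝ) → ℝ} {c₃ z K : ℝ} (hc₃ : 0 < c₃) (hz : 0 < z) (hφ₀ : ∀ x, 0 ≤ φ x)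
    (hφ : ∀ x, ∀ b : ℝ, 0 < b → c₃ * b * φ x ≤ φ (b • x))
    (hK : ∀ y, l2 y = 1 → φ (A⁻¹ *ᵥ y) ^ z ≤ K) (x : Fin d → ℝ) :
    (c₃ * φ x) ^ z ≤ l2 (A *ᵥ x) ^ z * K := by
  have h := rpow_mul_le_norm_rpow_mul (φ := fun u : EuclideanSpace ℝ (Fin d) ↦ φ (A⁻¹ *ᵥ u.ofLp))
    hc₃ hz (fun _ ↦ hφ₀ _) (fun u b hb ↦ by simpa [mulVec_smul] using hφ _ b hb)
    (fun u hu ↦ hK _ (by rwa [l2_eq_norm])) (WithLp.toLp 2 (A *ᵥ x))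
  simpa [nonsing_inv_mulVec_mulVec hA, l2_eq_norm] using h

theorem weightedSensitivity_le_of_svd_lower_bound {d : ℕ} {P : Finset (Fin d → ℝ)}
    {w : (Fin d → ℝ) → ℝ} {f g h : (Fin d → ℝ) → (Fin d → ℝ) → ℝ} {z c₁ c₂ c₃ c₅ c : ℝ}
    {A : Matrix (Fin d) (Fin d) ℝ} {v : Fin d → Fin d → ℝ} {p : Fin d → ℝ}
    (hw : ∀ q ∈ P, 0 ≤ w q) (hwp : 0 ≤ w p) (hgp : ∀ x, 0 ≤ g p x)
    (hh0 : ∀ q ∈ P, ∀ x, 0 ≤ h q x) (hz : 0 < z) (hc₁ : 0 < c₁) (hc₂ : 0 < c₂) (hc₃ : 0 < c₃)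
    (hc₅ : 0 < c₅) (hc : 0 < c) (hA : IsUnit A)
    (hf : ∀ x, f p x ≤ c₂ * (g p x ^ z + h p x ^ z))
    (hghom : ∀ x, ∀ b : ℝ, 0 < b → c₃ * b * g p x ≤ g p (b • x))
    (hhsmall : ∀ x, w p * h p x ^ z ≤
      (c₅ * w p / ∑ q ∈ P, w q) * ∑ q ∈ P, w q * h q x ^ z)
    (hlow : ∀ x, c₁ * ((c₃ * l2 (A *ᵥ x)) ^ z + ∑ q ∈ P, w q * h q x ^ z) ≤
      ∑ q ∈ P, w q * f q x)
    (hcv : ∀ y, l2 y = 1 → g p (A⁻¹ *ᵥ y) ^ z ≤ c * ∑ j, g p (A⁻¹ *ᵥ v j) ^ z) :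
    weightedSensitivity P w f p ≤ c₂ * c₅ / c₁ * (w p / ∑ q ∈ P, w q) +
      c * c₂ / (c₁ * c₃ ^ (2 * z)) * (w p * ∑ j, g p (A⁻¹ *ᵥ v j) ^ z) := by
  have hW : 0 ≤ ∑ q ∈ P, w q := sum_nonneg hw
  have hG : 0 ≤ ∑ j, g p (A⁻¹ *ᵥ v j) ^ z := sum_nonneg fun j _ ↦ Real.rpow_nonneg (hgp _) z
  refine weightedSensitivity_le (by positivity) fun x ↦ ?_
  set S := ∑ q ∈ P, w q * f q x
  set H := ∑ q ∈ P, w q * h q x ^ z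
  set N := l2 (A *ᵥ x)
  have hH : 0 ≤ H := sum_nonneg fun q hq ↦ mul_nonneg (hw q hq) (Real.rpow_nonneg (hh0 q hq x) z)
  have hN : 0 ≤ N := Real.sqrt_nonneg _
  have hc₃z : 0 < c₃ ^ z := Real.rpow_pos_of_pos hc₃ z
  have hS : c₁ * (c₃ ^ z * N ^ z) + c₁ * H ≤ S := by
    have := hlow x
    rwa [Real.mul_rpow hc₃.le hN, mul_add] at this
  have hpart : w p * h p x ^ z ≤ c₅ / c₁ * (w p / ∑ q ∈ P, w q) * S :=
    calc w p * h p x ^ z ≤ (c₅ * w p / ∑ q ∈ P, w q) * H := hhsmall x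
      _ ≤ (c₅ * w p / ∑ q ∈ P, w q) * (S / c₁) := by
        gcongr
        rw [le_div_iff₀ hc₁]
        nlinarith [mul_nonneg hc₁.le (mul_nonneg hc₃z.le (Real.rpow_nonneg hN z))]
      _ = c₅ / c₁ * (w p / ∑ q ∈ P, w q) * S := by ring
  have gpart : w p * g p x ^ z ≤
      c / (c₁ * c₃ ^ (2 * z)) * (w p * ∑ j, g p (A⁻¹ *ᵥ v j) ^ z) * S := by
    have hg := rpow_mul_le_l2_mulVec_rpow_mul hA hc₃ hz hgp hghom hcv x
    rw [Real.mul_rpow hc₃.le (hgp x)] at hg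
    calc w p * g p x ^ z = w p * (c₃ ^ z * g p x ^ z) / c₃ ^ z := by field_simp
      _ ≤ w p * (N ^ z * (c * ∑ j, g p (A⁻¹ *ᵥ v j) ^ z)) / c₃ ^ z := by gcongr
      _ = c / (c₁ * c₃ ^ (2 * z)) * (w p * ∑ j, g p (A⁻¹ *ᵥ v j) ^ z) *
            (c₁ * (c₃ ^ z * N ^ z)) := by
        rw [two_mul, Real.rpow_add hc₃]; field_simp
      _ ≤ c / (c₁ * c₃ ^ (2 * z)) * (w p * ∑ j, g p (A⁻¹ *ᵥ v j) ^ z) * S := by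
        gcongr
        linarith [mul_nonneg hc₁.le hH]
  calc w p * f p x ≤ c₂ * (w p * g p x ^ z) + c₂ * (w p * h p x ^ z) := by
        nlinarith [mul_le_mul_of_nonneg_left (hf x) hwp]
    _ ≤ c₂ * (c / (c₁ * c₃ ^ (2 * z)) * (w p * ∑ j, g p (A⁻¹ *ᵥ v j) ^ z) * S) +
        c₂ * (c₅ / c₁ * (w p / ∑ q ∈ P, w q) * S) := by gcongr
    _ = _ := by ring

theorem weighted_total_sensitivity_bound_general {d n : ℕ}
    (P : Finset (Fin d → ℝ)) (hcard : P.card = n)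
    (w : (Fin d → ℝ) → ℝ) (hw : ∀ p ∈ P, 0 ≤ w p) (hW : 0 < ∑ q ∈ P, w q)
    (f g h : (Fin d → ℝ) → (Fin d → ℝ) → ℝ)
    (hg0 : ∀ p ∈ P, ∀ x, 0 ≤ g p x)
    (hh0 : ∀ p ∈ P, ∀ x, 0 ≤ h p x)
    (z c₁ c₂ c₃ c₄ c₅ : ℝ) (hz : 0 < z) (hc₁ : 0 < c₁) (hc₂ : 0 < c₂)
    (hc₃ : 0 < c₃) (hc₄ : 0 < c₄) (hc₅ : 0 < c₅)
    (hsand : ∀ p ∈ P, ∀ x, c₁ * (g p x ^ z + h p x ^ z) ≤ f p x ∧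
      f p x ≤ c₂ * (g p x ^ z + h p x ^ z))
    (hghom : ∀ p ∈ P, ∀ x, ∀ b : ℝ, 0 < b →
      c₃ * b * g p x ≤ g p (b • x) ∧ g p (b • x) ≤ c₄ * b * g p x)
    (hhsmall : ∀ p ∈ P, ∀ x, w p * h p x ^ z ≤
      (c₅ * w p / ∑ q ∈ P, w q) * ∑ q ∈ P, w q * h q x ^ z)
    (D V : Matrix (Fin d) (Fin d) ℝ) (hinv : IsUnit (D * Vᵀ))
    (hlow : ∀ x, c₁ * ((c₃ * l2 ((D * Vᵀ).mulVec x)) ^ z + ∑ q ∈ P, w q * h q x ^ z) ≤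
      ∑ q ∈ P, w q * f q x)
    (α : ℝ) (hα : 0 < α)
    (hup : ∀ x, ∑ q ∈ P, w q ^ max 1 (1 / z) * g q x ^ max 1 z ≤
      (c₄ * α * l2 ((D * Vᵀ).mulVec x)) ^ max 1 z)
    (v : Fin d → Fin d → ℝ) (hv : ∀ j, l2 (v j) = 1) (c : ℝ) (hc : 0 < c)
    (hcv : ∀ y : Fin d → ℝ, l2 y = 1 → ∀ p ∈ P,
      g p ((D * Vᵀ)⁻¹.mulVec y) ^ z ≤ c * ∑ j, g p ((D * Vᵀ)⁻¹.mulVec (v j)) ^ z) :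
    ∑ p ∈ P, (⨆ x : {x : Fin d → ℝ // 0 < ∑ q ∈ P, w q * f q x},
        w p * f p (x : Fin d → ℝ) / ∑ q ∈ P, w q * f q (x : Fin d → ℝ)) ≤
      c₂ * c₅ / c₁ +
        (c * c₂ * c₄ ^ z / (c₁ * c₃ ^ (2 * z))) * max ((n : ℝ) ^ (1 - z)) 1 * α ^ z * d := by
  subst hcard
  set A := D * Vᵀ
  set W := ∑ q ∈ P, w q
  set M := max ((#P : ℝ) ^ (1 - z)) 1
  have hsens : ∀ p ∈ P, weightedSensitivity P w f p ≤ c₂ * c₅ / c₁ * (w p / W) +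
      c * c₂ / (c₁ * c₃ ^ (2 * z)) * ∑ j, w p * g p (A⁻¹ *ᵥ v j) ^ z := fun p hp ↦ by
    rw [← mul_sum]
    exact weightedSensitivity_le_of_svd_lower_bound hw (hw p hp) (hg0 p hp) hh0 hz hc₁ hc₂ hc₃ hc₅
      hc hinv (fun x ↦ (hsand p hp x).2) (fun x b hb ↦ (hghom p hp x b hb).1) (hhsmall p hp)
      hlow (fun y hy ↦ hcv y hy p hp)
  have hdir : ∀ j, ∑ p ∈ P, w p * g p (A⁻¹ *ᵥ v j) ^ z ≤ M * (c₄ * α) ^ z := fun j ↦ by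
    have hupj := hup (A⁻¹ *ᵥ v j)
    rw [mulVec_nonsing_inv_mulVec hinv, hv j, mul_one] at hupj
    exact sum_mul_rpow_le_of_sum_rpow_max_le P hw (fun p hp ↦ hg0 p hp _) hz (by positivity) hupj
  calc ∑ p ∈ P, weightedSensitivity P w f p
      ≤ ∑ p ∈ P, (c₂ * c₅ / c₁ * (w p / W) +
          c * c₂ / (c₁ * c₃ ^ (2 * z)) * ∑ j, w p * g p (A⁻¹ *ᵥ v j) ^ z) := sum_le_sum hsens
    _ = c₂ * c₅ / c₁ + c * c₂ / (c₁ * c₃ ^ (2 * z)) *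
          ∑ j, ∑ p ∈ P, w p * g p (A⁻¹ *ᵥ v j) ^ z := by
      rw [sum_add_distrib, ← mul_sum, ← mul_sum, ← sum_div, div_self hW.ne', mul_one, sum_comm]
    _ ≤ c₂ * c₅ / c₁ + c * c₂ / (c₁ * c₃ ^ (2 * z)) * ∑ _j : Fin d, M * (c₄ * α) ^ z := by
      gcongr with j; exact hdir j
    _ = _ := by
      rw [sum_const, card_univ, Fintype.card_fin, nsmul_eq_mul, Real.mul_rpow hc₄.le hα.le]; ring

/-- Weighted total sensitivity bound for near-convex functions (generalized version):
under the weighted `f`-SVD assumptions, the sum of the weighted sensitivities is at most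
`c₂c₅/c₁ + (c c₂ c₄^z/(c₁ c₃^(2z)))·max{n^(1−z),1}·α^z·d`. -/
theorem weighted_total_sensitivity_bound {d n : ℕ}
    (P : Finset (Fin d → ℝ)) (hcard : P.card = n)
    (w : (Fin d → ℝ) → ℝ) (hw : ∀ p ∈ P, 0 ≤ w p) (hW : 0 < ∑ q ∈ P, w q)
    (f g h : (Fin d → ℝ) → (Fin d → ℝ) → ℝ)
    (hf0 : ∀ p ∈ P, ∀ x, 0 ≤ f p x) (hg0 : ∀ p ∈ P, ∀ x, 0 ≤ g p x)
    (hh0 : ∀ p ∈ P, ∀ x, 0 ≤ h p x)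
    (z c₁ c₂ c₃ c₄ c₅ : ℝ) (hz : 0 < z) (hc₁ : 0 < c₁) (hc₂ : 0 < c₂)
    (hc₃ : 0 < c₃) (hc₄ : 0 < c₄) (hc₅ : 0 < c₅)
    (hsand : ∀ p ∈ P, ∀ x, c₁ * (g p x ^ z + h p x ^ z) ≤ f p x ∧
      f p x ≤ c₂ * (g p x ^ z + h p x ^ z))
    (hghom : ∀ p ∈ P, ∀ x, ∀ b : ℝ, 0 < b →
      c₃ * b * g p x ≤ g p (b • x) ∧ g p (b • x) ≤ c₄ * b * g p x)
    (hhsmall : ∀ p ∈ P, ∀ x, w p * h p x ^ z ≤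
      (c₅ * w p / ∑ q ∈ P, w q) * ∑ q ∈ P, w q * h q x ^ z)
    (D V : Matrix (Fin d) (Fin d) ℝ) (hD : D.IsDiag) (hDnn : ∀ i, 0 ≤ D i i)
    (hV : Vᵀ * V = 1 ∧ V * Vᵀ = 1) (hinv : IsUnit (D * Vᵀ))
    (hlow : ∀ x, c₁ * ((c₃ * l2 ((D * Vᵀ).mulVec x)) ^ z + ∑ q ∈ P, w q * h q x ^ z) ≤
      ∑ q ∈ P, w q * f q x)
    (α : ℝ) (hα : 0 < α)
    (hup : ∀ x, ∑ q ∈ P, w q ^ max 1 (1 / z) * g q x ^ max 1 z ≤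
      (c₄ * α * l2 ((D * Vᵀ).mulVec x)) ^ max 1 z)
    (v : Fin d → Fin d → ℝ) (hv : ∀ j, l2 (v j) = 1) (c : ℝ) (hc : 0 < c)
    (hcv : ∀ y : Fin d → ℝ, l2 y = 1 → ∀ p ∈ P,
      g p ((D * Vᵀ)⁻¹.mulVec y) ^ z ≤ c * ∑ j, g p ((D * Vᵀ)⁻¹.mulVec (v j)) ^ z) :
    ∑ p ∈ P, (⨆ x : {x : Fin d → ℝ // 0 < ∑ q ∈ P, w q * f q x},
        w p * f p (x : Fin d → ℝ) / ∑ q ∈ P, w q * f q (x : Fin d → ℝ)) ≤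
      c₂ * c₅ / c₁ +
        (c * c₂ * c₄ ^ z / (c₁ * c₃ ^ (2 * z))) * max ((n : ℝ) ^ (1 - z)) 1 * α ^ z * d :=
  weighted_total_sensitivity_bound_general P hcard w hw hW f g h hg0 hh0 z c₁ c₂ c₃ c₄ c₅ hz hc₁ hc₂
    hc₃ hc₄ hc₅ hsand hghom hhsmall D V hinv hlow α hα hup v hv c hc hcv
end

section
/- For every real numbers r and b, ln(1 + e^{−|r| + b}) + r² ≥ (1/2)·ln(1 + e^{b}). -/
/-- For every real `r` and `b`, `ln(1 + e^(-|r|+b)) + r² ≥ (1/2) ln(1 + e^b)`. -/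
theorem logistic_lower (r b : ℝ) :
    Real.log (1 + Real.exp (-|r| + b)) + r ^ 2 ≥ (1 / 2) * Real.log (1 + Real.exp b) := by
  set t := |r| with hts
  have ht : 0 ≤ t := abs_nonneg r
  have hr2 : r ^ 2 = t ^ 2 := (sq_abs r).symm
  have hE : Real.exp (-t + b) = Real.exp (-t) * Real.exp b := by
    rw [← Real.exp_add]
  have hpos : (0:ℝ) < 1 + Real.exp (-t + b) := by positivity
  have hpos2 : (0:ℝ) < 1 + Real.exp b := by positivity
  have hEpos : (0:ℝ) < Real.exp (-t) := Real.exp_pos _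
  have hEbpos : (0:ℝ) < Real.exp b := Real.exp_pos _
  rcases le_or_gt t (1/2) with h | h
  · -- t ≤ 1/2 : show (1+e^{-t+b})^2 ≥ 1+e^b
    have h1 : 1 - t ≤ Real.exp (-t) := by
      have := Real.add_one_le_exp (-t)
      linarith
    have h2 : (1:ℝ) ≤ 2 * Real.exp (-t) := by linarith
    have key : (1 + Real.exp b) ≤ (1 + Real.exp (-t + b)) ^ 2 := by
      rw [hE]; nlinarith [sq_nonneg (Real.exp (-t) * Real.exp b)]
    have hlog : Real.log (1 + Real.exp b) ≤ 2 * Real.log (1 + Real.exp (-t + b)) := by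
      have := Real.log_le_log hpos2 key
      rwa [Real.log_pow, Nat.cast_ofNat] at this
    nlinarith [sq_nonneg t]
  · -- t > 1/2 : show (1+e^{-t+b})^2 ≥ e^{-t}(1+e^b)
    have h1 : Real.exp (-t) ≤ 1 := Real.exp_le_one_iff.mpr (by linarith)
    have key : Real.exp (-t) * (1 + Real.exp b) ≤ (1 + Real.exp (-t + b)) ^ 2 := by
      rw [hE]; nlinarith [sq_nonneg (Real.exp (-t) * Real.exp b)]
    have hlog : -t + Real.log (1 + Real.exp b) ≤ 2 * Real.log (1 + Real.exp (-t + b)) := by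
      have hle := Real.log_le_log (by positivity) key
      rw [Real.log_mul (ne_of_gt hEpos) (ne_of_gt hpos2), Real.log_exp,
        Real.log_pow, Nat.cast_ofNat] at hle
      exact hle
    nlinarith [sq_nonneg (t - 1/2)]
end

section
/- Let N > 1 and c ∈ [1, N] be real numbers, and let p ∈ ℝ^d with ‖p‖₂ ≤ 1. Then for every x ∈ ℝ^d and b ∈ ℝ, (1/c)·ln(1 + e^{pᵀx + b}) + ‖x‖₂²/(2N) ≤ (4/c)·(pᵀx)² + 4·max{ (1/c)·ln(1 + e^{b}), ‖x‖₂²/(2N) }. -/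
/-- Key analytic bound: `log(1+e^(b+t)) ≤ 2 log(1+e^b) + 4 t²`. -/
lemma log_one_add_exp_bound (b t : ℝ) :
    Real.log (1 + Real.exp (t + b)) ≤ 2 * Real.log (1 + Real.exp b) + 4 * t ^ 2 := by
  have heb : (0:ℝ) < Real.exp b := Real.exp_pos b
  have h1 : (0:ℝ) < 1 + Real.exp (t + b) := by positivity
  have hexp4 : (1:ℝ) ≤ Real.exp (4 * t ^ 2) := Real.one_le_exp (by positivity)
  have ht : Real.exp t ≤ 2 * Real.exp (4 * t ^ 2) := by
    have h2 : t ≤ Real.log 2 + 4 * t ^ 2 := by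
      nlinarith [Real.log_two_gt_d9, sq_nonneg (2 * t - 1 / 4)]
    calc Real.exp t ≤ Real.exp (Real.log 2 + 4 * t ^ 2) := Real.exp_le_exp.2 h2
      _ = 2 * Real.exp (4 * t ^ 2) := by
          rw [Real.exp_add, Real.exp_log (by norm_num)]
  have hmain : 1 + Real.exp (t + b) ≤ Real.exp (4 * t ^ 2) * (1 + Real.exp b) ^ 2 := by
    rw [Real.exp_add]
    nlinarith [mul_le_mul_of_nonneg_right ht heb.le,
      mul_nonneg (le_trans zero_le_one hexp4) (sq_nonneg (Real.exp b)), hexp4, heb]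
  calc Real.log (1 + Real.exp (t + b))
      ≤ Real.log (Real.exp (4 * t ^ 2) * (1 + Real.exp b) ^ 2) :=
        Real.log_le_log h1 hmain
    _ = 4 * t ^ 2 + 2 * Real.log (1 + Real.exp b) := by
        rw [Real.log_mul (by positivity) (by positivity), Real.log_exp, Real.log_pow]
        push_cast; ring
    _ = 2 * Real.log (1 + Real.exp b) + 4 * t ^ 2 := by ring

/-- Upper bound on the regularized logistic loss: for `N > 1`, `c ∈ [1,N]`, `‖p‖₂ ≤ 1`,
and every `x ∈ ℝ^d`, `b ∈ ℝ`:
`(1/c) ln(1 + e^(pᵀx + b)) + ‖x‖₂²/(2N) ≤ (4/c)(pᵀx)² + 4 max{(1/c) ln(1+e^b), ‖x‖₂²/(2N)}`. -/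
theorem logistic_loss_upper {d : ℕ} (N c : ℝ) (hN : 1 < N) (hc : c ∈ Set.Icc 1 N)
    (p : Fin d → ℝ) (hp : l2 p ≤ 1) (x : Fin d → ℝ) (b : ℝ) :
    (1 / c) * Real.log (1 + Real.exp ((∑ i, p i * x i) + b)) + l2 x ^ 2 / (2 * N) ≤
    (4 / c) * (∑ i, p i * x i) ^ 2 +
      4 * max ((1 / c) * Real.log (1 + Real.exp b)) (l2 x ^ 2 / (2 * N)) := by
  obtain ⟨hc1, hcN⟩ := hc
  have hc0 : (0:ℝ) < c := lt_of_lt_of_le one_pos hc1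
  set t := ∑ i, p i * x i with ht
  set A := Real.log (1 + Real.exp b) with hA
  set B := l2 x ^ 2 / (2 * N) with hB
  have hkey := log_one_add_exp_bound b t
  have hB0 : 0 ≤ B := by
    have : (0:ℝ) ≤ l2 x ^ 2 := sq_nonneg _
    have h2N : (0:ℝ) < 2 * N := by linarith
    positivity
  have hM1 : (1 / c) * A ≤ max ((1 / c) * A) B := le_max_left _ _
  have hM2 : B ≤ max ((1 / c) * A) B := le_max_right _ _
  have hM0 : 0 ≤ max ((1 / c) * A) B := le_trans hB0 hM2
  have hinv : 0 < 1 / c := by positivity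
  have hstep : (1 / c) * Real.log (1 + Real.exp (t + b)) ≤
      (1 / c) * (2 * A + 4 * t ^ 2) := by
    apply mul_le_mul_of_nonneg_left _ (le_of_lt hinv)
    linarith
  have h4c : (1 / c) * (4 * t ^ 2) = (4 / c) * t ^ 2 := by ring
  nlinarith [hstep, hM1, hM2, hM0]
end

section
/- Let N > 1 and c ∈ [1, N] be real numbers, and let p ∈ ℝ^d with ‖p‖₂ ≤ 1. Then for every x ∈ ℝ^d and b ∈ ℝ, (1/c)·ln(1 + e^{pᵀx + b}) + ‖x‖₂²/(2N) ≥ (c/(8N))·( (1/c)·(pᵀx)² + max{ (1/c)·ln(1 + e^{b}), ‖x‖₂²/(2N) } ). -/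
lemma softplus_nonneg (u : ℝ) : 0 ≤ Real.log (1 + Real.exp u) :=
  Real.log_nonneg (by nlinarith [Real.exp_pos u])

lemma softplus_lipschitz (u t : ℝ) (ht : t ≤ 0) :
    Real.log (1 + Real.exp u) ≤ Real.log (1 + Real.exp (u + t)) - t := by
  have h1 : (0:ℝ) < 1 + Real.exp (u + t) := by positivity
  have h2 : Real.exp (-t) * Real.exp (u + t) = Real.exp u := by
    rw [← Real.exp_add]; ring_nf
  have h3 : (1 + Real.exp u) ≤ Real.exp (-t) * (1 + Real.exp (u + t)) := by
    have := Real.one_le_exp (neg_nonneg.2 ht)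
    nlinarith [Real.exp_pos (u + t)]
  calc Real.log (1 + Real.exp u)
      ≤ Real.log (Real.exp (-t) * (1 + Real.exp (u + t))) :=
        Real.log_le_log (by positivity) h3
    _ = -t + Real.log (1 + Real.exp (u + t)) := by
        rw [Real.log_mul (Real.exp_ne_zero _) (ne_of_gt h1), Real.log_exp]
    _ = Real.log (1 + Real.exp (u + t)) - t := by ring

lemma softplus_exp (u t : ℝ) (ht : t ≤ 0) :
    Real.exp t * Real.log (1 + Real.exp u) ≤ Real.log (1 + Real.exp (u + t)) := by
  have hθ : 0 ≤ Real.exp t := (Real.exp_pos t).le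
  have hθ1 : Real.exp t ≤ 1 := Real.exp_le_one_iff.mpr ht
  have hconv := convexOn_exp.2 (Set.mem_univ (Real.log (1 + Real.exp u)))
    (Set.mem_univ (0:ℝ)) hθ (by linarith : (0:ℝ) ≤ 1 - Real.exp t) (by ring)
  simp only [smul_eq_mul, mul_zero, add_zero, Real.exp_zero, mul_one] at hconv
  have hpos : (0:ℝ) < 1 + Real.exp u := by positivity
  rw [Real.exp_log hpos] at hconv
  -- hconv : exp (exp t * log (1+exp u)) ≤ exp t * (1 + exp u) + (1 - exp t)
  have h4 : Real.exp t * (1 + Real.exp u) + (1 - Real.exp t) = 1 + Real.exp (u + t) := by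
    rw [Real.exp_add]; ring
  rw [h4] at hconv
  calc Real.exp t * Real.log (1 + Real.exp u)
      = Real.log (Real.exp (Real.exp t * Real.log (1 + Real.exp u))) := (Real.log_exp _).symm
    _ ≤ Real.log (1 + Real.exp (u + t)) := Real.log_le_log (Real.exp_pos _) hconv

lemma softplus_key (u t : ℝ) :
    Real.log (1 + Real.exp u) ≤ 8 * Real.log (1 + Real.exp (u + t)) + 3 * t ^ 2 := by
  have h0 := softplus_nonneg u
  have h1 := softplus_nonneg (u + t)
  rcases le_or_gt 0 t with h | h
  · have : Real.log (1 + Real.exp u) ≤ Real.log (1 + Real.exp (u + t)) :=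
      Real.log_le_log (by positivity) (by nlinarith [Real.exp_le_exp.2 (by linarith : u ≤ u + t)])
    nlinarith [sq_nonneg t]
  rcases le_or_gt (-1) t with h2 | h2
  · have he := softplus_exp u t h.le
    have he1 : Real.exp (-1) ≤ Real.exp t := Real.exp_le_exp.2 h2
    have he2 : Real.exp 1 < 2.7182818286 := Real.exp_one_lt_d9
    have he3 : Real.exp (-1) = (Real.exp 1)⁻¹ := by rw [Real.exp_neg]
    have he4 : (0:ℝ) < Real.exp 1 := Real.exp_pos 1
    have he5 : (1:ℝ)/8 ≤ Real.exp (-1) := by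
      rw [he3, div_le_iff₀ (by norm_num), inv_mul_eq_div, le_div_iff₀ he4]; nlinarith
    nlinarith [sq_nonneg t]
  · have hl := softplus_lipschitz u t h.le
    nlinarith [sq_nonneg (t + 1)]

/-- Lower bound on the regularized logistic loss: for `N > 1`, `c ∈ [1,N]`, `‖p‖₂ ≤ 1`,
and every `x ∈ ℝ^d`, `b ∈ ℝ`:
`(1/c) ln(1 + e^(pᵀx + b)) + ‖x‖₂²/(2N) ≥ (c/(8N))((1/c)(pᵀx)² + max{(1/c) ln(1+e^b), ‖x‖₂²/(2N)})`. -/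
theorem logistic_loss_lower {d : ℕ} (N c : ℝ) (hN : 1 < N) (hc : c ∈ Set.Icc 1 N)
    (p : Fin d → ℝ) (hp : l2 p ≤ 1) (x : Fin d → ℝ) (b : ℝ) :
    (1 / c) * Real.log (1 + Real.exp ((∑ i, p i * x i) + b)) + l2 x ^ 2 / (2 * N) ≥
    (c / (8 * N)) * ((1 / c) * (∑ i, p i * x i) ^ 2 +
      max ((1 / c) * Real.log (1 + Real.exp b)) (l2 x ^ 2 / (2 * N))) := by
  obtain ⟨hc1, hcN⟩ := hc
  have hc0 : (0:ℝ) < c := by linarith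
  have hN0 : (0:ℝ) < N := by linarith
  set t : ℝ := ∑ i, p i * x i with htdef
  set X : ℝ := l2 x ^ 2 with hXdef
  set F1 : ℝ := Real.log (1 + Real.exp (t + b)) with hF1
  set F0 : ℝ := Real.log (1 + Real.exp b) with hF0
  have hF1n : 0 ≤ F1 := softplus_nonneg _
  have hF0n : 0 ≤ F0 := softplus_nonneg _
  have hXn : 0 ≤ X := sq_nonneg _
  -- Cauchy–Schwarz: t^2 ≤ X
  have hCS : t ^ 2 ≤ X := by
    have h1 : t ^ 2 ≤ (∑ i, p i ^ 2) * (∑ i, x i ^ 2) :=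
      Finset.sum_mul_sq_le_sq_mul_sq Finset.univ p x
    have hp2 : (∑ i, p i ^ 2) = l2 p ^ 2 := by
      rw [l2, Real.sq_sqrt (Finset.sum_nonneg fun i _ => sq_nonneg _)]
    have hx2 : (∑ i, x i ^ 2) = X := by
      rw [hXdef, l2, Real.sq_sqrt (Finset.sum_nonneg fun i _ => sq_nonneg _)]
    have hpn : 0 ≤ l2 p := Real.sqrt_nonneg _
    have hp2' : l2 p ^ 2 ≤ 1 := by nlinarith
    rw [hp2, hx2] at h1
    nlinarith [mul_le_mul_of_nonneg_right hp2' hXn]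
  -- key softplus inequality
  have hkey : F0 ≤ 8 * F1 + 3 * t ^ 2 := by
    have := softplus_key b t
    rw [add_comm b t] at this
    exact this
  clear_value t X F1 F0
  clear hp htdef hXdef hF1 hF0 p x
  rw [ge_iff_le]
  rcases max_cases ((1 / c) * F0) (X / (2 * N)) with ⟨hm, _⟩ | ⟨hm, _⟩ <;> rw [hm]
  · -- max = (1/c) F0
    have h8N : (0:ℝ) < 8 * N := by linarith
    rw [div_mul_eq_mul_div, div_le_iff₀ h8N]
    have hct : c * t ^ 2 ≤ c * X := by nlinarith
    have hcF : c * F0 ≤ 8 * N * F1 + 3 * c * t ^ 2 := by nlinarith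
    have hinv : c * (1/c) = 1 := by field_simp
    have hX2N : X / (2 * N) * (8 * N) = 4 * X := by field_simp; ring
    have hF1c : F1 / N ≤ 1 / c * F1 := by
      rw [div_le_iff₀ hN0]
      have : 1 / c * F1 * N = (N / c) * F1 := by ring
      rw [this]
      have : (1:ℝ) ≤ N / c := (one_le_div hc0).2 hcN
      nlinarith
    have expand : c * ((1/c) * t ^ 2 + (1/c) * F0) = t ^ 2 + F0 := by field_simp
    rw [expand]
    have : t ^ 2 + F0 ≤ 8 * F1 + 4 * t ^ 2 := by nlinarith
    have h2 : t ^ 2 + F0 ≤ 8 * F1 + 4 * X := by nlinarith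
    calc t ^ 2 + F0 ≤ 8 * F1 + 4 * X := h2
      _ ≤ (1 / c * F1 + X / (2 * N)) * (8 * N) := by
          rw [add_mul, hX2N]
          have h3 : 8 * F1 ≤ 1 / c * F1 * (8 * N) := by
            have := hF1c
            rw [div_le_iff₀ hN0] at this
            nlinarith
          linarith
  · -- max = X/(2N)
    have h8N : (0:ℝ) < 8 * N := by linarith
    rw [div_mul_eq_mul_div, div_le_iff₀ h8N]
    have expand : c * ((1/c) * t ^ 2 + X / (2 * N)) = t ^ 2 + c * X / (2 * N) := by
      field_simp
    rw [expand]
    have hXN : c * X / (2 * N) ≤ X / 2 := by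
      rw [div_le_div_iff₀ (by linarith) (by norm_num)]
      nlinarith
    have hF1c : 0 ≤ 1 / c * F1 := by positivity
    have hX2N : X / (2 * N) * (8 * N) = 4 * X := by field_simp; ring
    calc t ^ 2 + c * X / (2 * N) ≤ X + X / 2 := by nlinarith
      _ ≤ (1 / c * F1 + X / (2 * N)) * (8 * N) := by
          rw [add_mul, hX2N]
          nlinarith
end

section
/- Let γ ∈ (0,1], N ≥ 1, and c ∈ [1, N] be real numbers, and let p ∈ ℝ^d with ‖p‖₂ ≤ 1. Then for every x ∈ ℝ^d and b ∈ ℝ with ‖x‖₂ ≥ γ and |b| ≤ 9‖x‖₂, it holds that ‖x‖₂²/N + (1/c)·max{0, 1 + pᵀx + b} ≥ (c·γ²/((1 + 10γ)·N)) · ( (1/c)·|pᵀx|² + max{ 1/c, b/c, ‖x‖₂²/N } ). -/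
set_option maxHeartbeats 800000


/-- Lower bound on the regularized hinge (SVM) loss: for `γ ∈ (0,1]`, `N ≥ 1`, `c ∈ [1,N]`,
`‖p‖₂ ≤ 1`, and every `x ∈ ℝ^d`, `b ∈ ℝ` with `‖x‖₂ ≥ γ` and `|b| ≤ 9‖x‖₂`:
`‖x‖₂²/N + (1/c) max{0, 1 + pᵀx + b} ≥ (cγ²/((1+10γ)N))((1/c)|pᵀx|² + max{1/c, b/c, ‖x‖₂²/N})`. -/
theorem svm_loss_lower {d : ℕ} (γ N c : ℝ) (hγ : γ ∈ Set.Ioc (0 : ℝ) 1) (hN : 1 ≤ N)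
    (hc : c ∈ Set.Icc 1 N) (p : Fin d → ℝ) (hp : l2 p ≤ 1)
    (x : Fin d → ℝ) (b : ℝ) (hx : γ ≤ l2 x) (hb : |b| ≤ 9 * l2 x) :
    l2 x ^ 2 / N + (1 / c) * max 0 (1 + (∑ i, p i * x i) + b) ≥
    (c * γ ^ 2 / ((1 + 10 * γ) * N)) *
      ((1 / c) * |∑ i, p i * x i| ^ 2 + max (1 / c) (max (b / c) (l2 x ^ 2 / N))) := by
  obtain ⟨hγ0, hγ1⟩ := hγ
  obtain ⟨hc1, hcN⟩ := hc
  have hN0 : (0:ℝ) < N := by linarith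
  have hc0 : (0:ℝ) < c := by linarith
  set t := ∑ i, p i * x i with ht
  set s := l2 x with hs
  have hs0 : 0 < s := lt_of_lt_of_le hγ0 hx
  have hγsq : γ ^ 2 ≤ 1 := by nlinarith
  have hγγ : γ ^ 2 ≤ γ := by nlinarith
  -- Cauchy-Schwarz: t^2 ≤ s^2
  have hts : t ^ 2 ≤ s ^ 2 := by
    have h1 : t ^ 2 ≤ (∑ i, p i ^ 2) * (∑ i, x i ^ 2) :=
      Finset.sum_mul_sq_le_sq_mul_sq _ _ _
    have hpnn : (0:ℝ) ≤ ∑ i, p i ^ 2 := Finset.sum_nonneg fun i _ => sq_nonneg (p i)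
    have hpn : (∑ i, p i ^ 2) ≤ 1 := by
      have h2 : Real.sqrt (∑ i, p i ^ 2) ≤ 1 := hp
      nlinarith [Real.sq_sqrt hpnn, Real.sqrt_nonneg (∑ i, p i ^ 2)]
    have hxn : (∑ i, x i ^ 2) = s ^ 2 := by
      rw [hs, l2, Real.sq_sqrt (Finset.sum_nonneg (fun i _ => sq_nonneg (x i)))]
    have hxnn : (0:ℝ) ≤ ∑ i, x i ^ 2 := Finset.sum_nonneg fun i _ => sq_nonneg (x i)
    nlinarith
  set M := max (1 / c) (max (b / c) (s ^ 2 / N)) with hM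
  have hbs : b ≤ 9 * s := le_trans (le_abs_self b) hb
  -- bound c*γ^2*M ≤ (1+9γ)*s^2
  have h1 : c * γ ^ 2 * (1 / c) ≤ (1 + 9 * γ) * s ^ 2 := by
    have : c * γ ^ 2 * (1 / c) = γ ^ 2 := by field_simp
    rw [this]; nlinarith
  have h2 : c * γ ^ 2 * (b / c) ≤ (1 + 9 * γ) * s ^ 2 := by
    have he : c * γ ^ 2 * (b / c) = γ ^ 2 * b := by field_simp
    have h2a : γ ^ 2 * b ≤ γ ^ 2 * (9 * s) :=
      mul_le_mul_of_nonneg_left hbs (sq_nonneg γ)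
    have h2b : γ * (γ * s) ≤ s * (γ * s) :=
      mul_le_mul_of_nonneg_right hx (by positivity)
    rw [he]; nlinarith [sq_nonneg s]
  have h3 : c * γ ^ 2 * (s ^ 2 / N) ≤ (1 + 9 * γ) * s ^ 2 := by
    have hu : 0 ≤ s ^ 2 / N := by positivity
    have hcg : c * γ ^ 2 ≤ N := by
      calc c * γ ^ 2 ≤ c * 1 := mul_le_mul_of_nonneg_left hγsq hc0.le
        _ ≤ N := by linarith
    have hsN : s ^ 2 = N * (s ^ 2 / N) := by field_simp
    nlinarith
  have hMb : c * γ ^ 2 * M ≤ (1 + 9 * γ) * s ^ 2 := by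
    have hcg0 : 0 ≤ c * γ ^ 2 := by positivity
    rw [hM, mul_max_of_nonneg _ _ hcg0, mul_max_of_nonneg _ _ hcg0]
    exact max_le h1 (max_le h2 h3)
  have key : c * γ ^ 2 * ((1 / c) * |t| ^ 2 + M) ≤ (1 + 10 * γ) * s ^ 2 := by
    have habs : |t| ^ 2 = t ^ 2 := sq_abs t
    have h4 : c * γ ^ 2 * ((1 / c) * |t| ^ 2) = γ ^ 2 * t ^ 2 := by
      rw [habs]; field_simp
    have h5a : γ ^ 2 * t ^ 2 ≤ γ ^ 2 * s ^ 2 := mul_le_mul_of_nonneg_left hts (sq_nonneg γ)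
    have h5b : γ ^ 2 * s ^ 2 ≤ γ * s ^ 2 := mul_le_mul_of_nonneg_right hγγ (sq_nonneg s)
    have h5 : γ ^ 2 * t ^ 2 ≤ γ * s ^ 2 := le_trans h5a h5b
    nlinarith
  have hden : (0:ℝ) < (1 + 10 * γ) * N := by positivity
  have hRHS : (c * γ ^ 2 / ((1 + 10 * γ) * N)) * ((1 / c) * |t| ^ 2 + M) ≤ s ^ 2 / N := by
    rw [div_mul_eq_mul_div, div_le_div_iff₀ hden hN0]
    calc c * γ ^ 2 * ((1 / c) * |t| ^ 2 + M) * N ≤ (1 + 10 * γ) * s ^ 2 * N := by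
          apply mul_le_mul_of_nonneg_right key hN0.le
      _ = s ^ 2 * ((1 + 10 * γ) * N) := by ring
  have hhinge : 0 ≤ (1 / c) * max 0 (1 + t + b) := by positivity
  linarith
end

section
/- For every vector x = (x₁,…,x_d) ∈ ℝ^d there exists an index j ∈ {1,…,d} such that ‖x‖₁ ≤ (3d/2 − 1)·|x₁ + x_j|. -/
/-- For every `x ∈ ℝ^d` (`d ≥ 1`) there is an index `j` such that
`‖x‖₁ ≤ (3d/2 − 1)·|x₁ + x_j|`. -/
theorem boundingMinOperator (d : ℕ) (hd : 1 ≤ d) (x : Fin d → ℝ) :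
    ∃ j : Fin d, ∑ i, |x i| ≤ (3 * (d : ℝ) / 2 - 1) * |x ⟨0, hd⟩ + x j| := by
  set z : Fin d := ⟨0, hd⟩ with hzdef
  obtain ⟨j, -, hj⟩ := Finset.exists_max_image Finset.univ
    (fun j => |x z + x j|) ⟨z, Finset.mem_univ z⟩
  refine ⟨j, ?_⟩
  set M : ℝ := |x z + x j| with hM
  have hM0 : 0 ≤ M := abs_nonneg _
  have hz2 : |x z| ≤ M / 2 := by
    have := hj z (Finset.mem_univ z)
    have h2 : |x z + x z| = 2 * |x z| := by
      rw [← two_mul, abs_mul]; norm_num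
    simp only [h2] at this
    linarith
  have hsplit : ∑ i, |x i| = |x z| + ∑ i ∈ Finset.univ.erase z, |x i| :=
    (Finset.add_sum_erase _ _ (Finset.mem_univ z)).symm
  have hbound : ∑ i ∈ Finset.univ.erase z, |x i| ≤ ((d : ℝ) - 1) * (3 / 2 * M) := by
    have hcard : (Finset.univ.erase z).card = d - 1 := by
      rw [Finset.card_erase_of_mem (Finset.mem_univ z), Finset.card_univ, Fintype.card_fin]
    have := Finset.sum_le_card_nsmul (Finset.univ.erase z) (fun i => |x i|)
      (3 / 2 * M) ?_
    · rw [hcard, nsmul_eq_mul, Nat.cast_sub hd, Nat.cast_one] at this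
      exact this
    · intro i _
      have h1 : |x i| ≤ |x z + x i| + |x z| := by
        calc |x i| = |(x z + x i) - x z| := by ring_nf
          _ ≤ |x z + x i| + |x z| := abs_sub _ _
      have h2 := hj i (Finset.mem_univ i)
      linarith
  rw [hsplit]
  have hd' : (1 : ℝ) ≤ (d : ℝ) := by exact_mod_cast hd
  nlinarith [hM0, hz2, hbound]
end

section
/- Let z ∈ (0,1), let P be a finite set of points in ℝ^d, let w : P → [0,∞) be a weight function, and let M be an invertible d×d real matrix such that ‖Mx‖₂^z ≤ ∑_{q∈P} w(q)·|qᵀx|^z for every x ∈ ℝ^d. Then for every p ∈ P, sup_{x : ∑_{q∈P} w(q)|qᵀx|^z > 0} w(p)·|pᵀx|^z / ∑_{q∈P} w(q)·|qᵀx|^z ≤ w(p)·‖(Mᵀ)⁻¹p‖_z^z. -/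
open Matrix

/-- Subadditivity of `t ↦ t^z` on nonneg reals for `0 ≤ z ≤ 1`, two-term version. -/
lemma rpow_add_le_add_rpow_real {z a b : ℝ} (hz0 : 0 ≤ z) (hz1 : z ≤ 1)
    (ha : 0 ≤ a) (hb : 0 ≤ b) : (a + b) ^ z ≤ a ^ z + b ^ z := by
  have := NNReal.rpow_add_le_add_rpow ⟨a, ha⟩ ⟨b, hb⟩ hz0 hz1
  exact_mod_cast this

/-- Subadditivity of `t ↦ t^z` for finite sums. -/
lemma sum_rpow_subadd {ι : Type*} (s : Finset ι) (f : ι → ℝ) {z : ℝ}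
    (hz0 : 0 < z) (hz1 : z ≤ 1) (hf : ∀ i ∈ s, 0 ≤ f i) :
    (∑ i ∈ s, f i) ^ z ≤ ∑ i ∈ s, f i ^ z := by
  classical
  induction s using Finset.induction with
  | empty =>
    simp [Real.zero_rpow hz0.ne']
  | @insert a s hni ih =>
    rw [Finset.sum_insert hni, Finset.sum_insert hni]
    have h1 : 0 ≤ f a := hf a (Finset.mem_insert_self a s)
    have h2 : 0 ≤ ∑ i ∈ s, f i :=
      Finset.sum_nonneg fun i hi => hf i (Finset.mem_insert_of_mem hi)
    calc (f a + ∑ i ∈ s, f i) ^ z ≤ f a ^ z + (∑ i ∈ s, f i) ^ z :=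
          rpow_add_le_add_rpow_real hz0.le hz1 h1 h2
      _ ≤ f a ^ z + ∑ i ∈ s, f i ^ z := by
          gcongr
          exact ih fun i hi => hf i (Finset.mem_insert_of_mem hi)

/-- Sensitivity bound for `ℓ_z`-regression, `z ∈ (0,1)`: if `M` is an invertible matrix
with `‖Mx‖₂^z ≤ ∑_{q∈P} w(q)|qᵀx|^z` for every `x`, then the weighted sensitivity of each
`p ∈ P` is at most `w(p)·‖(Mᵀ)⁻¹p‖_z^z`. -/
theorem lz_sensitivity_small_z {d : ℕ} (z : ℝ) (hz : z ∈ Set.Ioo (0 : ℝ) 1)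
    (P : Finset (Fin d → ℝ)) (w : (Fin d → ℝ) → ℝ) (hw : ∀ p ∈ P, 0 ≤ w p)
    (M : Matrix (Fin d) (Fin d) ℝ) (hM : IsUnit M)
    (hMlow : ∀ x : Fin d → ℝ, l2 (M.mulVec x) ^ z ≤ ∑ q ∈ P, w q * |∑ i, q i * x i| ^ z) :
    ∀ p ∈ P,
      (⨆ x : {x : Fin d → ℝ // 0 < ∑ q ∈ P, w q * |∑ i, q i * x i| ^ z},
        w p * |∑ i, p i * (x : Fin d → ℝ) i| ^ z /
          ∑ q ∈ P, w q * |∑ i, q i * (x : Fin d → ℝ) i| ^ z) ≤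
      w p * ∑ i, |(Mᵀ)⁻¹.mulVec p i| ^ z := by
  obtain ⟨hz0, hz1⟩ := hz
  intro p hp
  set u : Fin d → ℝ := (Mᵀ)⁻¹.mulVec p with hu
  have hBnn : 0 ≤ w p * ∑ i, |u i| ^ z := by
    apply mul_nonneg (hw p hp)
    exact Finset.sum_nonneg fun i _ => Real.rpow_nonneg (abs_nonneg _) z
  by_cases hne : Nonempty {x : Fin d → ℝ // 0 < ∑ q ∈ P, w q * |∑ i, q i * x i| ^ z}
  · apply ciSup_le
    rintro ⟨x, hx⟩
    simp only
    rw [div_le_iff₀ hx]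
    -- key rewriting: pᵀx = uᵀ(Mx)
    have hdet : IsUnit Mᵀ.det := by
      rw [Matrix.det_transpose]
      exact (Matrix.isUnit_iff_isUnit_det M).mp hM
    have hkey : (∑ i, p i * x i) = ∑ i, u i * M.mulVec x i := by
      have : u ⬝ᵥ M.mulVec x = p ⬝ᵥ x := by
        rw [Matrix.dotProduct_mulVec, hu]
        have : Matrix.vecMul ((Mᵀ)⁻¹.mulVec p) M = p := by
          rw [← Matrix.mulVec_transpose, Matrix.mulVec_mulVec,
            Matrix.mul_nonsing_inv _ hdet, Matrix.one_mulVec]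
        rw [this]
      simpa [dotProduct, mul_comm] using this.symm
    set y := M.mulVec x with hy
    have hl2nn : 0 ≤ l2 y := Real.sqrt_nonneg _
    have hstep1 : |∑ i, p i * x i| ^ z ≤ ∑ i, |u i| ^ z * |y i| ^ z := by
      calc |∑ i, p i * x i| ^ z = |∑ i, u i * y i| ^ z := by rw [hkey]
        _ ≤ (∑ i, |u i * y i|) ^ z := by
            apply Real.rpow_le_rpow (abs_nonneg _) (Finset.abs_sum_le_sum_abs _ _) hz0.le
        _ ≤ ∑ i, |u i * y i| ^ z :=
            sum_rpow_subadd _ _ hz0 hz1.le fun i _ => abs_nonneg _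
        _ = ∑ i, |u i| ^ z * |y i| ^ z := by
            refine Finset.sum_congr rfl fun i _ => ?_
            rw [abs_mul, Real.mul_rpow (abs_nonneg _) (abs_nonneg _)]
    have hstep2 : ∀ i : Fin d, |y i| ^ z ≤ l2 y ^ z := by
      intro i
      apply Real.rpow_le_rpow (abs_nonneg _) _ hz0.le
      rw [l2, ← Real.sqrt_sq_eq_abs]
      apply Real.sqrt_le_sqrt
      exact Finset.single_le_sum (f := fun j => y j ^ 2) (fun j _ => sq_nonneg _)
        (Finset.mem_univ i)
    have hstep3 : |∑ i, p i * x i| ^ z ≤ (∑ i, |u i| ^ z) * l2 y ^ z := by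
      refine hstep1.trans ?_
      rw [Finset.sum_mul]
      apply Finset.sum_le_sum
      intro i _
      exact mul_le_mul_of_nonneg_left (hstep2 i) (Real.rpow_nonneg (abs_nonneg _) z)
    calc w p * |∑ i, p i * x i| ^ z
        ≤ w p * ((∑ i, |u i| ^ z) * l2 y ^ z) :=
          mul_le_mul_of_nonneg_left hstep3 (hw p hp)
      _ ≤ w p * ((∑ i, |u i| ^ z) * (∑ q ∈ P, w q * |∑ i, q i * x i| ^ z)) := by
          apply mul_le_mul_of_nonneg_left _ (hw p hp)
          apply mul_le_mul_of_nonneg_left (hMlow x)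
          exact Finset.sum_nonneg fun i _ => Real.rpow_nonneg (abs_nonneg _) z
      _ = (w p * ∑ i, |u i| ^ z) * ∑ q ∈ P, w q * |∑ i, q i * x i| ^ z := by ring
  · rw [not_nonempty_iff] at hne
    rw [Real.iSup_of_isEmpty]
    exact hBnn
end

section
/- Let z ∈ [1,2), let P be a finite set of points in ℝ^d, let w : P → [0,∞) be a weight function, and let M be an invertible d×d real matrix such that for every x ∈ ℝ^d, ‖Mx‖₂^z ≤ ∑_{q∈P} w(q)·|qᵀx|^z ≤ d^{z/2}·‖Mx‖₂^z. Then the total sensitivity satisfies ∑_{p∈P} sup_{x : ∑_{q∈P} w(q)|qᵀx|^z > 0} w(p)·|pᵀx|^z / ∑_{q∈P} w(q)·|qᵀx|^z ≤ d^{z/2 + 1}. -/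
open Matrix

lemma real_rpow_add_le {a b p : ℝ} (ha : 0 ≤ a) (hb : 0 ≤ b) (hp : 0 ≤ p) (hp1 : p ≤ 1) :
    (a + b) ^ p ≤ a ^ p + b ^ p := by
  have h := NNReal.rpow_add_le_add_rpow a.toNNReal b.toNNReal hp hp1
  have := NNReal.coe_le_coe.mpr h
  simpa [NNReal.coe_rpow, Real.coe_toNNReal, ha, hb, Real.coe_toNNReal _ (add_nonneg ha hb)]
    using this

lemma real_sum_rpow_le {ι : Type*} (s : Finset ι) (f : ι → ℝ) (hf : ∀ i ∈ s, 0 ≤ f i)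
    {p : ℝ} (hp : 0 < p) (hp1 : p ≤ 1) :
    (∑ i ∈ s, f i) ^ p ≤ ∑ i ∈ s, f i ^ p := by
  classical
  induction s using Finset.induction with
  | empty => simp [Real.zero_rpow hp.ne']
  | @insert a s ha ih =>
    rw [Finset.sum_insert ha, Finset.sum_insert ha]
    have h1 : (f a + ∑ i ∈ s, f i) ^ p ≤ f a ^ p + (∑ i ∈ s, f i) ^ p :=
      real_rpow_add_le (hf a (Finset.mem_insert_self a s))
        (Finset.sum_nonneg fun i hi => hf i (Finset.mem_insert_of_mem hi)) hp.le hp1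
    exact h1.trans (by gcongr; exact ih fun i hi => hf i (Finset.mem_insert_of_mem hi))

lemma abs_sum_mul_le_l2_mul_l2 {d : ℕ} (f g : Fin d → ℝ) :
    |∑ i, f i * g i| ≤ l2 f * l2 g := by
  have h := Finset.sum_mul_sq_le_sq_mul_sq Finset.univ f g
  have := Real.sqrt_le_sqrt h
  rwa [Real.sqrt_sq_eq_abs, Real.sqrt_mul (Finset.sum_nonneg fun i _ => sq_nonneg _)] at this

/-- Total sensitivity bound for `ℓ_z`-regression, `z ∈ [1,2)`: if `M` is an invertible
matrix with `‖Mx‖₂^z ≤ ∑_{q∈P} w(q)|qᵀx|^z ≤ d^(z/2)·‖Mx‖₂^z` for every `x`, then the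
sum of the weighted sensitivities is at most `d^(z/2+1)`. -/
theorem lz_total_sensitivity_mid_z {d : ℕ} (z : ℝ) (hz : z ∈ Set.Ico (1 : ℝ) 2)
    (P : Finset (Fin d → ℝ)) (w : (Fin d → ℝ) → ℝ) (hw : ∀ p ∈ P, 0 ≤ w p)
    (M : Matrix (Fin d) (Fin d) ℝ) (hM : IsUnit M)
    (hMlow : ∀ x : Fin d → ℝ, l2 (M.mulVec x) ^ z ≤ ∑ q ∈ P, w q * |∑ i, q i * x i| ^ z)
    (hMup : ∀ x : Fin d → ℝ,
      ∑ q ∈ P, w q * |∑ i, q i * x i| ^ z ≤ (d : ℝ) ^ (z / 2) * l2 (M.mulVec x) ^ z) :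
    ∑ p ∈ P,
      (⨆ x : {x : Fin d → ℝ // 0 < ∑ q ∈ P, w q * |∑ i, q i * x i| ^ z},
        w p * |∑ i, p i * (x : Fin d → ℝ) i| ^ z /
          ∑ q ∈ P, w q * |∑ i, q i * (x : Fin d → ℝ) i| ^ z) ≤
    (d : ℝ) ^ (z / 2 + 1) := by
  classical
  obtain ⟨hz1, hz2⟩ := hz
  have hz0 : (0 : ℝ) < z := lt_of_lt_of_le one_pos hz1
  have hMdet : IsUnit M.det := (Matrix.isUnit_iff_isUnit_det M).mp hM
  set N := M⁻¹ with hNdef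
  have hNM : N * M = 1 := Matrix.nonsing_inv_mul M hMdet
  have hMN : M * N = 1 := Matrix.mul_nonsing_inv M hMdet
  set y : (Fin d → ℝ) → Fin d → ℝ := fun p j => ∑ i, p i * N i j with hy
  -- rewrite p·x through the factorization
  have hrw : ∀ p x : Fin d → ℝ, ∑ i, p i * x i = ∑ j, y p j * (M.mulVec x) j := by
    intro p x
    have hx : N.mulVec (M.mulVec x) = x := by
      rw [Matrix.mulVec_mulVec, hNM, Matrix.one_mulVec]
    conv_lhs => rw [← hx]
    calc ∑ i, p i * (N.mulVec (M.mulVec x)) i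
        = ∑ i, ∑ j, p i * (N i j * (M.mulVec x) j) := by
          simp [Matrix.mulVec, dotProduct, Finset.mul_sum]
      _ = ∑ j, ∑ i, p i * (N i j * (M.mulVec x) j) := Finset.sum_comm
      _ = ∑ j, y p j * (M.mulVec x) j := by
          refine Finset.sum_congr rfl fun j _ => ?_
          rw [hy, Finset.sum_mul]
          exact Finset.sum_congr rfl fun i _ => (mul_assoc _ _ _).symm
  have habs : ∀ p x : Fin d → ℝ, |∑ i, p i * x i| ≤ l2 (y p) * l2 (M.mulVec x) := by
    intro p x
    rw [hrw]
    exact abs_sum_mul_le_l2_mul_l2 _ _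
  have hl2nn : ∀ v : Fin d → ℝ, 0 ≤ l2 v := fun v => Real.sqrt_nonneg _
  -- bound each sensitivity
  have hsup : ∀ p ∈ P,
      (⨆ x : {x : Fin d → ℝ // 0 < ∑ q ∈ P, w q * |∑ i, q i * x i| ^ z},
        w p * |∑ i, p i * (x : Fin d → ℝ) i| ^ z /
          ∑ q ∈ P, w q * |∑ i, q i * (x : Fin d → ℝ) i| ^ z) ≤ w p * l2 (y p) ^ z := by
    intro p hp
    have hB : 0 ≤ w p * l2 (y p) ^ z :=
      mul_nonneg (hw p hp) (Real.rpow_nonneg (hl2nn _) z)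
    refine Real.iSup_le (fun x => ?_) hB
    obtain ⟨x, hx⟩ := x
    rw [div_le_iff₀ hx]
    calc w p * |∑ i, p i * x i| ^ z
        ≤ w p * (l2 (y p) * l2 (M.mulVec x)) ^ z := by
          refine mul_le_mul_of_nonneg_left ?_ (hw p hp)
          exact Real.rpow_le_rpow (abs_nonneg _) (habs p x) hz0.le
      _ = (w p * l2 (y p) ^ z) * l2 (M.mulVec x) ^ z := by
          rw [Real.mul_rpow (hl2nn _) (hl2nn _)]; ring
      _ ≤ (w p * l2 (y p) ^ z) * ∑ q ∈ P, w q * |∑ i, q i * x i| ^ z :=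
          mul_le_mul_of_nonneg_left (hMlow x) hB
  -- ℓ₂-to-ℓ_z comparison
  have hyb : ∀ p ∈ P, w p * l2 (y p) ^ z ≤ ∑ j, w p * |y p j| ^ z := by
    intro p hp
    rw [← Finset.mul_sum]
    refine mul_le_mul_of_nonneg_left ?_ (hw p hp)
    have hsq : (0 : ℝ) ≤ ∑ j, y p j ^ 2 := Finset.sum_nonneg fun j _ => sq_nonneg _
    have h1 : l2 (y p) ^ z = (∑ j, y p j ^ 2) ^ (z / 2) := by
      rw [l2, Real.sqrt_eq_rpow, ← Real.rpow_mul hsq]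
      congr 1; ring
    rw [h1]
    have h2 : (∑ j, y p j ^ 2) ^ (z / 2) ≤ ∑ j, (y p j ^ 2) ^ (z / 2) :=
      real_sum_rpow_le _ _ (fun j _ => sq_nonneg _) (by linarith) (by linarith)
    refine h2.trans_eq (Finset.sum_congr rfl fun j _ => ?_)
    rw [← sq_abs, ← Real.rpow_natCast |y p j| 2, ← Real.rpow_mul (abs_nonneg _)]
    congr 1; push_cast; ring
  -- columns of N
  have hE : ∀ j : Fin d, ∑ q ∈ P, w q * |∑ i, q i * N i j| ^ z ≤ (d : ℝ) ^ (z / 2) := by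
    intro j
    have h := hMup (fun i => N i j)
    have hMv : M.mulVec (fun i => N i j) = fun k => (1 : Matrix (Fin d) (Fin d) ℝ) k j := by
      funext k
      rw [← hMN, Matrix.mul_apply]
      rfl
    have hl2one : l2 (M.mulVec (fun i => N i j)) = 1 := by
      rw [hMv, l2]
      have : ∑ k, ((1 : Matrix (Fin d) (Fin d) ℝ) k j) ^ 2 = 1 := by
        simp [Matrix.one_apply, ite_pow]
      rw [this, Real.sqrt_one]
    calc ∑ q ∈ P, w q * |∑ i, q i * N i j| ^ z
        ≤ (d : ℝ) ^ (z / 2) * l2 (M.mulVec (fun i => N i j)) ^ z := h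
      _ = (d : ℝ) ^ (z / 2) := by rw [hl2one, Real.one_rpow, mul_one]
  -- put everything together
  calc ∑ p ∈ P,
      (⨆ x : {x : Fin d → ℝ // 0 < ∑ q ∈ P, w q * |∑ i, q i * x i| ^ z},
        w p * |∑ i, p i * (x : Fin d → ℝ) i| ^ z /
          ∑ q ∈ P, w q * |∑ i, q i * (x : Fin d → ℝ) i| ^ z)
      ≤ ∑ p ∈ P, w p * l2 (y p) ^ z := Finset.sum_le_sum hsup
    _ ≤ ∑ p ∈ P, ∑ j, w p * |y p j| ^ z := Finset.sum_le_sum hyb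
    _ = ∑ j, ∑ p ∈ P, w p * |y p j| ^ z := Finset.sum_comm
    _ ≤ ∑ j : Fin d, (d : ℝ) ^ (z / 2) := Finset.sum_le_sum fun j _ => hE j
    _ = (d : ℝ) * (d : ℝ) ^ (z / 2) := by
        rw [Finset.sum_const, Finset.card_univ, Fintype.card_fin, nsmul_eq_mul]
    _ = (d : ℝ) ^ (z / 2 + 1) := by
        rw [Real.rpow_add' (Nat.cast_nonneg d) (by positivity), Real.rpow_one, mul_comm]
end

section
/- Let P be a finite set of points in ℝ^d and let w : P → [0,∞) be a weight function. For each q ∈ P let q′ ∈ ℝ^{d+2} be the vector whose first coordinate is ‖q‖₂², whose next d coordinates are 2q, and whose last coordinate is 1. Then for every p ∈ P, sup_{x ∈ ℝ^d : ∑_{q∈P} w(q)‖q−x‖₂² > 0} w(p)·‖p−x‖₂² / ∑_{q∈P} w(q)·‖q−x‖₂² ≤ sup_{y ∈ ℝ^{d+2} : ∑_{q∈P} w(q)|q′ᵀy| > 0} w(p)·|p′ᵀy| / ∑_{q∈P} w(q)·|q′ᵀy|. That is, the weighted sensitivity of p for the least-squared-errors loss f(q,x) = ‖q−x‖₂² is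 at most the weighted sensitivity of p′ for the ℓ₁-regression loss g(q′,y) = |q′ᵀy| on the lifted point set P′ = {q′ : q ∈ P} ⊆ ℝ^{d+2}. -/
/-- Lift a point `q ∈ ℝ^d` to the point `q′ = (‖q‖₂², 2q, 1) ∈ ℝ^(d+2)`. -/
noncomputable def liftPoint {d : ℕ} (q : Fin d → ℝ) : Fin (d + 2) → ℝ :=
  Fin.cons (∑ i, q i ^ 2) (Fin.snoc (fun i => 2 * q i) 1)

/-- The lifted query corresponding to `x`: `(1, −x, ‖x‖₂²)`. -/
noncomputable def liftQuery {d : ℕ} (x : Fin d → ℝ) : Fin (d + 2) → ℝ :=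
  Fin.cons 1 (Fin.snoc (fun i => -x i) (∑ i, x i ^ 2))

lemma lift_dot {d : ℕ} (q x : Fin d → ℝ) :
    ∑ i, liftPoint q i * liftQuery x i = ∑ i, (q i - x i) ^ 2 := by
  unfold liftPoint liftQuery
  rw [Fin.sum_univ_succ]
  simp only [Fin.cons_zero, Fin.cons_succ]
  rw [Fin.sum_univ_castSucc]
  simp only [Fin.snoc_castSucc, Fin.snoc_last]
  have h : ∀ i, (q i - x i) ^ 2 = q i ^ 2 + 2 * q i * (-x i) + x i ^ 2 := by
    intro i; ring
  simp_rw [h, Finset.sum_add_distrib]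
  ring

/-- The weighted sensitivity of `p ∈ P` for the least-squared-errors loss
`f(q,x) = ‖q − x‖₂²` is at most the weighted sensitivity of the lifted point
`p′ = (‖p‖₂², 2p, 1)` for the `ℓ₁`-regression loss `g(q′,y) = |q′ᵀy|` on the lifted set. -/
theorem lse_sensitivity_reduction {d : ℕ} (P : Finset (Fin d → ℝ))
    (w : (Fin d → ℝ) → ℝ) (hw : ∀ p ∈ P, 0 ≤ w p) :
    ∀ p ∈ P,
      (⨆ x : {x : Fin d → ℝ // 0 < ∑ q ∈ P, w q * ∑ i, (q i - x i) ^ 2},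
        w p * (∑ i, (p i - (x : Fin d → ℝ) i) ^ 2) /
          ∑ q ∈ P, w q * ∑ i, (q i - (x : Fin d → ℝ) i) ^ 2) ≤
      (⨆ y : {y : Fin (d + 2) → ℝ // 0 < ∑ q ∈ P, w q * |∑ i, liftPoint q i * y i|},
        w p * |∑ i, liftPoint p i * (y : Fin (d + 2) → ℝ) i| /
          ∑ q ∈ P, w q * |∑ i, liftPoint q i * (y : Fin (d + 2) → ℝ) i|) := by
  intro p hp
  -- The RHS terms are nonnegative and bounded above by 1.
  have hterm_nonneg : ∀ y : {y : Fin (d + 2) → ℝ //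
      0 < ∑ q ∈ P, w q * |∑ i, liftPoint q i * y i|},
      0 ≤ w p * |∑ i, liftPoint p i * (y : Fin (d + 2) → ℝ) i| /
        ∑ q ∈ P, w q * |∑ i, liftPoint q i * (y : Fin (d + 2) → ℝ) i| := by
    intro y
    apply div_nonneg
    · exact mul_nonneg (hw p hp) (abs_nonneg _)
    · exact le_of_lt y.2
  have hbdd : BddAbove (Set.range fun y : {y : Fin (d + 2) → ℝ //
      0 < ∑ q ∈ P, w q * |∑ i, liftPoint q i * y i|} =>
      w p * |∑ i, liftPoint p i * (y : Fin (d + 2) → ℝ) i| /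
        ∑ q ∈ P, w q * |∑ i, liftPoint q i * (y : Fin (d + 2) → ℝ) i|) := by
    refine ⟨1, ?_⟩
    rintro _ ⟨y, rfl⟩
    rw [div_le_one y.2]
    exact Finset.single_le_sum (f := fun q => w q * |∑ i, liftPoint q i * (y : Fin (d + 2) → ℝ) i|)
      (fun q hq => mul_nonneg (hw q hq) (abs_nonneg _)) hp
  have hRHS_nonneg : 0 ≤ ⨆ y : {y : Fin (d + 2) → ℝ //
      0 < ∑ q ∈ P, w q * |∑ i, liftPoint q i * y i|},
      w p * |∑ i, liftPoint p i * (y : Fin (d + 2) → ℝ) i| /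
        ∑ q ∈ P, w q * |∑ i, liftPoint q i * (y : Fin (d + 2) → ℝ) i| :=
    Real.iSup_nonneg hterm_nonneg
  apply Real.iSup_le _ hRHS_nonneg
  intro x
  -- map x to the lifted query
  have hsum : ∀ q : Fin d → ℝ, |∑ i, liftPoint q i * liftQuery (x : Fin d → ℝ) i|
      = ∑ i, (q i - (x : Fin d → ℝ) i) ^ 2 := by
    intro q
    rw [lift_dot]
    exact abs_of_nonneg (Finset.sum_nonneg fun i _ => sq_nonneg _)
  have hpos : 0 < ∑ q ∈ P, w q * |∑ i, liftPoint q i * liftQuery (x : Fin d → ℝ) i| := by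
    simp_rw [hsum]
    exact x.2
  have hle := le_ciSup hbdd ⟨liftQuery (x : Fin d → ℝ), hpos⟩
  refine le_trans (le_of_eq ?_) hle
  simp_rw [hsum]
end
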